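/- Let l ≥ 4 and let H be a disjoint union of paths whose longest path has order n₁(H) ≥ 2l−3. Then K_2 + H contains C_{l,l} as a subgraph. -/

import Mathlib

/-!
Both cycles pass through a vertex `u'` of the first side of the join, which is adjacent to
every vertex of `H`. For a path `v₁ ⋯ v_{2l-3}` of `H`, the first cycle is `u' v₁ ⋯ v_{l-1} u'`
and the second is `u' v_l ⋯ v_{2l-4} u'' v_{2l-3} u'`, where the detour through the other
vertex `u''` of the first side makes up for the vertices of `H` spent on the first cycle.
-/

open SimpleGraph

/-- The adjacency spectral radius of a finite simple graph. -/
noncomputable def specRad {V : Type*} [Fintype V] [DecidableEq V] (G : SimpleGraph V) : ℝ :=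
  letI := Classical.decRel G.Adj
  sSup ((fun μ : ℝ => |μ|) '' spectrum ℝ (G.adjMatrix ℝ))

/-- `G` contains a copy of `H` as a subgraph. -/
def Contains {V W : Type*} (G : SimpleGraph V) (H : SimpleGraph W) : Prop :=
  ∃ f : W ↪ V, ∀ a b, H.Adj a b → G.Adj (f a) (f b)

/-- `G` contains `C_{l,l}`: two cycles of length `l` sharing exactly one vertex. -/
def ContainsCll {V : Type*} (G : SimpleGraph V) (l : ℕ) : Prop :=
  ∃ (u : V) (c₁ c₂ : G.Walk u u), c₁.IsCycle ∧ c₂.IsCycle ∧ c₁.length = l ∧ c₂.length = l ∧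
    ∀ v, v ∈ c₁.support → v ∈ c₂.support → v = u

/-- Theta graph on `k` vertices: the cycle `0,1,…,k-1` plus a chord from `0` to `a`. -/
def thetaGraph (k a : ℕ) : SimpleGraph (Fin k) :=
  SimpleGraph.fromRel (fun i j =>
    (j : ℕ) = (i : ℕ) + 1 ∨ ((i : ℕ) = k - 1 ∧ (j : ℕ) = 0) ∨ ((i : ℕ) = 0 ∧ (j : ℕ) = a))

/-- `G` contains some member of `Θ_k`, the set of Theta graphs on `k` vertices. -/
def ContainsTheta {V : Type*} (G : SimpleGraph V) (k : ℕ) : Prop :=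
  ∃ a, 2 ≤ a ∧ a ≤ k - 2 ∧ Contains G (thetaGraph k a)

/-- The join of two graphs: all edges between the two vertex sets are added. -/
def joinG {V W : Type*} (G : SimpleGraph V) (H : SimpleGraph W) : SimpleGraph (V ⊕ W) where
  Adj a b := match a, b with
    | Sum.inl a, Sum.inl b => G.Adj a b
    | Sum.inr a, Sum.inr b => H.Adj a b
    | Sum.inl _, Sum.inr _ => True
    | Sum.inr _, Sum.inl _ => True
  symm := by
    constructor
    rintro (a | a) (b | b) h
    · exact G.adj_symm h
    · trivial
    · trivial
    · exact H.adj_symm h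
  loopless := by
    constructor
    rintro (a | a) h
    · exact G.irrefl h
    · exact H.irrefl h

/-- The disjoint union of `t` paths, the `i`-th having `f i` vertices. -/
def pathsUnion (t : ℕ) (f : ℕ → ℕ) : SimpleGraph (Σ i : Fin t, Fin (f i.1)) where
  Adj a b := a.1 = b.1 ∧ ((a.2 : ℕ) + 1 = (b.2 : ℕ) ∨ (b.2 : ℕ) + 1 = (a.2 : ℕ))
  symm := by
    constructor
    rintro ⟨i, a⟩ ⟨j, b⟩ ⟨h₁, h₂⟩
    exact ⟨h₁.symm, h₂.symm⟩
  loopless := by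
    constructor
    rintro ⟨i, a⟩ ⟨-, h⟩
    omega

/-- `H` is a minor of `G`: disjoint connected branch sets, one for each vertex of `H`,
with edges of `G` between branch sets corresponding to edges of `H`. -/
def IsMinor {V W : Type*} (H : SimpleGraph W) (G : SimpleGraph V) : Prop :=
  ∃ B : W → Set V, (∀ w, (B w).Nonempty) ∧ (∀ w, (G.induce (B w)).Connected) ∧
    (∀ w₁ w₂, w₁ ≠ w₂ → Disjoint (B w₁) (B w₂)) ∧
    ∀ w₁ w₂, H.Adj w₁ w₂ → ∃ v₁ ∈ B w₁, ∃ v₂ ∈ B w₂, G.Adj v₁ v₂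

/-- Planarity via Wagner's theorem: no `K₅` minor and no `K₃,₃` minor. -/
def IsPlanar {V : Type*} (G : SimpleGraph V) : Prop :=
  ¬ IsMinor (⊤ : SimpleGraph (Fin 5)) G ∧
  ¬ IsMinor (completeBipartiteGraph (Fin 3) (Fin 3)) G

theorem List.exists_eq_append_append_cons {α : Type*} {P : List α} {a b : ℕ}
    (h : a + b < P.length) :
    ∃ A B z R, P = A ++ B ++ z :: R ∧ A.length = a ∧ B.length = b := by
  obtain ⟨z, R, hzR⟩ := List.exists_cons_of_length_pos (l := (P.drop a).drop b) (by simp; omega)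
  refine ⟨P.take a, (P.drop a).take b, z, R, ?_, by simp; omega, by simp; omega⟩
  rw [List.append_assoc, ← hzR, List.take_append_drop, List.take_append_drop]

namespace SimpleGraph

variable {V : Type*} {G : SimpleGraph V}

theorem exists_isCycle_of_isChain {u : V} {L : List V}
    (hchain : (u :: (L ++ [u])).IsChain G.Adj) (hnodup : (L ++ [u]).Nodup)
    (hlen : 2 ≤ L.length) :
    ∃ c : G.Walk u u, c.IsCycle ∧ c.length = L.length + 1 ∧ c.support = u :: (L ++ [u]) := by
  obtain ⟨c, hsupp⟩ : ∃ c : G.Walk u u, c.support = u :: (L ++ [u]) :=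
    ⟨(Walk.ofSupport _ (List.cons_ne_nil _ _) hchain).copy (by simp) (by simp),
      (Walk.support_copy _ _ _).trans (Walk.support_ofSupport _ _)⟩
  have hlength : c.length = L.length + 1 := by
    simpa [hsupp] using c.length_support.symm
  refine ⟨c, ?_, hlength, hsupp⟩
  cases c with
  | nil => simp at hsupp
  | cons h p =>
    refine Walk.isCycle_iff_isPath_tail_and_le_length.mpr ⟨?_, by omega⟩
    simp only [Walk.support_cons, List.cons.injEq, true_and] at hsupp
    rw [Walk.tail_cons]
    exact (Walk.isPath_copy _ _ _).mpr ((Walk.isPath_def p).mpr (hsupp ▸ hnodup))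

end SimpleGraph

section joinG

variable {V W : Type*} {G : SimpleGraph V} {H : SimpleGraph W}

@[simp] theorem joinG_adj_inl_inr {a : V} {b : W} : (joinG G H).Adj (.inl a) (.inr b) :=
  trivial

@[simp] theorem joinG_adj_inr_inl {a : W} {b : V} : (joinG G H).Adj (.inr a) (.inl b) :=
  trivial

theorem isChain_joinG_map_inr_append_inl {b : V} {A : List W} (hA : A.IsChain H.Adj) :
    (A.map Sum.inr ++ [Sum.inl b]).IsChain (joinG G H).Adj :=
  List.isChain_append.mpr ⟨List.isChain_map_of_isChain Sum.inr (fun _ _ h ↦ h) hA, .singleton _,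
    by simp [List.getLast?_map]⟩

theorem isChain_joinG_inl_map_inr_inl {a b : V} {A : List W} (hA : A.IsChain H.Adj)
    (hne : A ≠ []) : (Sum.inl a :: (A.map Sum.inr ++ [Sum.inl b])).IsChain (joinG G H).Adj := by
  obtain ⟨c, A, rfl⟩ := List.exists_cons_of_ne_nil hne
  exact List.isChain_cons_cons.mpr ⟨trivial, isChain_joinG_map_inr_append_inl hA⟩

theorem containsCll_joinG_of_isChain_append {x y : V} (hxy : x ≠ y) {l : ℕ} (hl : 4 ≤ l)
    {A B : List W} {z : W} (hA : A.IsChain H.Adj) (hB : B.IsChain H.Adj)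
    (hnodup : (A ++ B ++ [z]).Nodup) (hAlen : A.length + 1 = l) (hBlen : B.length + 3 = l) :
    ContainsCll (joinG G H) l := by
  simp only [List.nodup_append, List.mem_append, List.mem_singleton, forall_eq] at hnodup
  obtain ⟨⟨hAnd, hBnd, hAB⟩, -, hz⟩ := hnodup
  obtain ⟨c₁, hc₁, hlen₁, hsupp₁⟩ := exists_isCycle_of_isChain (u := Sum.inl x)
    (L := A.map Sum.inr) (isChain_joinG_inl_map_inr_inl hA (List.ne_nil_of_length_pos (by omega)))
    (by simp [List.nodup_append, List.nodup_map_iff Sum.inr_injective, hAnd])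
    (by rw [List.length_map]; omega)
  obtain ⟨c₂, hc₂, hlen₂, hsupp₂⟩ :=
    exists_isCycle_of_isChain (G := joinG G H) (u := Sum.inl x)
      (L := B.map Sum.inr ++ [Sum.inl y, Sum.inr z])
      (by simpa using isChain_joinG_inl_map_inr_inl hB (List.ne_nil_of_length_pos (by omega)))
      (by simpa [List.nodup_append, List.nodup_map_iff Sum.inr_injective, hBnd, hxy.symm] using
        fun a hb ↦ hz a (.inr hb))
      (by simp)
  refine ⟨Sum.inl x, c₁, c₂, hc₁, hc₂, by rw [hlen₁, List.length_map, hAlen], ?_,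
    fun v hv₁ hv₂ ↦ ?_⟩
  · simp only [hlen₂, List.length_append, List.length_map, List.length_cons, List.length_nil]
    omega
  · simp only [hsupp₁, List.mem_cons, List.mem_append, List.mem_map, List.not_mem_nil,
      or_false] at hv₁
    rcases hv₁ with rfl | ⟨a, ha, rfl⟩ | rfl
    · rfl
    · obtain hb | rfl : a ∈ B ∨ a = z := by simpa [hsupp₂] using hv₂
      · exact absurd rfl (hAB a ha a hb)
      · exact absurd rfl (hz a (.inl ha))
    · rfl

theorem containsCll_joinG_of_isChain {x y : V} (hxy : x ≠ y) {l : ℕ} (hl : 4 ≤ l) {P : List W}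
    (hP : P.IsChain H.Adj) (hnodup : P.Nodup) (hlen : 2 * l - 3 ≤ P.length) :
    ContainsCll (joinG G H) l := by
  obtain ⟨A, B, z, R, rfl, hAlen, hBlen⟩ :=
    List.exists_eq_append_append_cons (a := l - 1) (b := l - 3) (P := P) (by omega)
  exact containsCll_joinG_of_isChain_append (A := A) (B := B) (z := z) hxy hl
    (hP.infix ((List.prefix_append A B).isInfix.trans (List.prefix_append _ _).isInfix))
    (hP.infix (List.infix_append A B _))
    (hnodup.sublist (by simp)) (by omega) (by omega)

end joinG

theorem isChain_pathsUnion_map_finRange (t : ℕ) (f : ℕ → ℕ) (i : Fin t) :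
    ((List.finRange (f i)).map (Sigma.mk i)).IsChain (pathsUnion t f).Adj := by
  have hsucc : ((List.finRange (f i)).map Fin.val).IsChain (fun a b ↦ a + 1 = b) := by
    rw [List.map_coe_finRange_eq_range]
    exact (List.isChain_range _ _).mpr fun _ _ ↦ rfl
  rw [List.isChain_map] at hsucc ⊢
  exact hsucc.imp fun _ _ h ↦ ⟨rfl, Or.inl h⟩

theorem stmt18_general (l t : ℕ) (hl : 4 ≤ l) (ht : 1 ≤ t) (f : ℕ → ℕ)
    (h1 : 2 * l - 3 ≤ f 0) :
    ContainsCll (joinG (⊤ : SimpleGraph (Fin 2)) (pathsUnion t f)) l :=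
  containsCll_joinG_of_isChain (x := 0) (y := 1) (by decide) hl
    (isChain_pathsUnion_map_finRange t f ⟨0, ht⟩)
    ((List.nodup_finRange _).map sigma_mk_injective) (by simpa using h1)

theorem stmt18 (l t : ℕ) (hl : 4 ≤ l) (ht : 1 ≤ t) (f : ℕ → ℕ) (hf : Antitone f)
    (h1 : 2 * l - 3 ≤ f 0) :
    ContainsCll (joinG (⊤ : SimpleGraph (Fin 2)) (pathsUnion t f)) l :=
  stmt18_general l t hl ht f h1
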